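/- Let X be a convex field defined over all of ℍ² that is 0-lipschitz, and let v ∈ ℝ³. Then the set {p ∈ ℍ² : v ∧ p ∈ X(p)} is convex. -/

import Mathlib

noncomputable section

/-- Minkowski space `ℝ^{2,1}` as `Fin 3 → ℝ`. -/
abbrev V : Type := Fin 3 → ℝ

/-- The Minkowski form `⟨x|y⟩ = x₁y₁ + x₂y₂ − x₃y₃`. -/
def mink (x y : V) : ℝ := x 0 * y 0 + x 1 * y 1 - x 2 * y 2

/-- The Minkowski cross product. -/
def mcross (x y : V) : V :=
  ![x 1 * y 2 - x 2 * y 1, x 2 * y 0 - x 0 * y 2, -(x 0 * y 1) + x 1 * y 0]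

/-- The hyperbolic plane: upper sheet of the hyperboloid. -/
def H2 : Set V := {p | mink p p = -1 ∧ 0 < p 2}

/-- Inverse hyperbolic cosine. -/
def acosh (x : ℝ) : ℝ := Real.log (x + Real.sqrt (x ^ 2 - 1))

/-- Hyperbolic distance. -/
def hdist (p q : V) : ℝ := acosh (-(mink p q))

/-- Norm of a (spacelike) tangent vector. -/
def mnorm (x : V) : ℝ := Real.sqrt (mink x x)

/-- The point `exp_p(t x)`. -/
def mexp (p x : V) (t : ℝ) : V :=
  if x = 0 then p
  else Real.cosh (t * mnorm x) • p + (Real.sinh (t * mnorm x) / mnorm x) • x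

/-- `d'(x_p, x_q)`: the derivative at `t = 0` of `t ↦ d(exp_p(t x_p), exp_q(t x_q))`. -/
def dprime (p xp q xq : V) : ℝ :=
  deriv (fun t => hdist (mexp p xp t) (mexp q xq t)) 0

/-- A convex field on `ℍ²`. -/
def IsConvexField (X : Set (V × V)) : Prop :=
  IsClosed X ∧ (∀ px ∈ X, px.1 ∈ H2 ∧ mink px.2 px.1 = 0) ∧
    ∀ p : V, Convex ℝ {x : V | (p, x) ∈ X}

/-- The fiber `X(p)` of a convex field. -/
def fiberAt (X : Set (V × V)) (p : V) : Set V := {x | (p, x) ∈ X}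

/-- A convex field is defined over `A` if all fibers over `A` are nonempty. -/
def DefinedOver (X : Set (V × V)) (A : Set V) : Prop := ∀ p ∈ A, (fiberAt X p).Nonempty

/-- A convex field is `k`-lipschitz. -/
def LipschitzField (k : ℝ) (X : Set (V × V)) : Prop :=
  ∀ p xp q xq, (p, xp) ∈ X → (q, xq) ∈ X → p ≠ q → dprime p xp q xq ≤ k * hdist p q

/-- A (continuous) vector field on `ℍ²`. -/
def IsVectorField (X : V → V) : Prop := ContinuousOn X H2 ∧ ∀ p ∈ H2, mink (X p) p = 0

/-- A vector field is `k`-lipschitz. -/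
def LipschitzVF (k : ℝ) (X : V → V) : Prop :=
  ∀ p ∈ H2, ∀ q ∈ H2, p ≠ q → dprime p (X p) q (X q) ≤ k * hdist p q

/-- Hyperbolic convexity of a subset of `ℍ²`. -/
def HConvex (C : Set V) : Prop :=
  ∀ p ∈ C, ∀ q ∈ C, ∀ m ∈ H2, hdist p m + hdist m q = hdist p q → m ∈ C

/-- Hyperbolic convex hull. -/
def hconvexHull (A : Set V) : Set V := ⋂₀ {C : Set V | A ⊆ C ∧ C ⊆ H2 ∧ HConvex C}

/-- Interior of a subset of `ℍ²` relative to `ℍ²`. -/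
def relInterior (A : Set V) : Set V :=
  {p | p ∈ H2 ∧ ∃ O : Set V, IsOpen O ∧ p ∈ O ∧ O ∩ H2 ⊆ A}

/-- Linear automorphisms of `ℝ³`, a group under composition. -/
abbrev GL3 : Type := V ≃ₗ[ℝ] V

/-- Membership in `G₀`: preserves the Minkowski form, determinant one, preserves `ℍ²`. -/
def InG0 (g : GL3) : Prop :=
  (∀ x y : V, mink (g x) (g y) = mink x y) ∧
    LinearMap.det g.toLinearMap = 1 ∧ ∀ p ∈ H2, g p ∈ H2

/-- Properly discontinuous action on (a subset of) a topological space. -/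
def ProperlyDiscOn {Γ α : Type*} [TopologicalSpace α] (act : Γ → α → α) (S : Set α) : Prop :=
  ∀ K L : Set α, K ⊆ S → L ⊆ S → IsCompact K → IsCompact L →
    {γ : Γ | (act γ '' K ∩ L).Nonempty}.Finite

/-- A `j`-cocycle. -/
def IsCocycle {Γ : Type*} [Group Γ] (j : Γ →* GL3) (u : Γ → V) : Prop :=
  ∀ γ₁ γ₂ : Γ, u (γ₁ * γ₂) = u γ₁ + j γ₁ (u γ₂)

/-- Convex cocompact homomorphism. -/
def ConvexCocompact {Γ : Type*} [Group Γ] (j : Γ →* GL3) : Prop :=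
  Function.Injective j ∧
    ProperlyDiscOn (fun (γ : Γ) (p : V) => j γ p) H2 ∧
    ∃ C K : Set V, C.Nonempty ∧ IsClosed C ∧ C ⊆ H2 ∧ HConvex C ∧
      (∀ γ : Γ, j γ '' C = C) ∧ IsCompact K ∧ C ⊆ ⋃ γ : Γ, j γ '' K

/-- The convex core of `j`. -/
def ConvexCore {Γ : Type*} [Group Γ] (j : Γ →* GL3) : Set V :=
  ⋂₀ {C : Set V | C.Nonempty ∧ IsClosed C ∧ C ⊆ H2 ∧ HConvex C ∧ ∀ γ : Γ, j γ '' C = C}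

/-- `(j,u)`-equivariance of a convex field. -/
def EquivField {Γ : Type*} [Group Γ] (j : Γ →* GL3) (u : Γ → V) (X : Set (V × V)) : Prop :=
  ∀ (γ : Γ), ∀ p ∈ H2,
    fiberAt X (j γ p) = (fun x => j γ x + mcross (u γ) (j γ p)) '' fiberAt X p

/-- `(j,u)`-equivariance of a vector field. -/
def EquivVF {Γ : Type*} [Group Γ] (j : Γ →* GL3) (u : Γ → V) (X : V → V) : Prop :=
  ∀ (γ : Γ), ∀ p ∈ H2, X (j γ p) = j γ (X p) + mcross (u γ) (j γ p)

/-- Translation length `λ(g) = inf_{p ∈ ℍ²} d(p, g·p)`. -/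
def transLength (g : V → V) : ℝ := sInf ((fun p => hdist p (g p)) '' H2)

/-- A transformation is hyperbolic if its translation length is positive. -/
def IsHyperbolic (g : V → V) : Prop := 0 < transLength g

/-- `cross(v)` as a linear map `w ↦ v ∧ w`. -/
def crossLM (v : V) : V →ₗ[ℝ] V where
  toFun w := mcross v w
  map_add' w₁ w₂ := by
    funext i
    fin_cases i <;>
      simp [mcross, Pi.add_apply] <;> ring
  map_smul' c w := by
    funext i
    fin_cases i <;>
      simp [mcross, Pi.smul_apply, smul_eq_mul] <;> ring

/-- `cross(v)` as a continuous linear map. -/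
def crossCLM (v : V) : V →L[ℝ] V := LinearMap.toContinuousLinearMap (crossLM v)

/-- A geodesic line of `ℍ²`. -/
def IsGeodesicLine (ℓ : Set V) : Prop :=
  ∃ a ∈ H2, ∃ b ∈ H2, a ≠ b ∧ ℓ = {m ∈ H2 | mink m (mcross a b) = 0}

/-- A `j(Γ)`-invariant geodesic lamination in the convex core. -/
def IsLamination {Γ : Type*} [Group Γ] (j : Γ →* GL3) (L : Set (Set V)) : Prop :=
  L.Nonempty ∧
  (∀ ℓ ∈ L, IsGeodesicLine ℓ ∧ ℓ ⊆ ConvexCore j) ∧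
  (∀ ℓ₁ ∈ L, ∀ ℓ₂ ∈ L, ℓ₁ ≠ ℓ₂ → ℓ₁ ∩ ℓ₂ = ∅) ∧
  IsClosed (⋃₀ L) ∧
  ∀ (γ : Γ), ∀ ℓ ∈ L, j γ '' ℓ ∈ L

/-- The geodesic flow on the tangent bundle. -/
def gflow (t : ℝ) (px : V × V) : V × V :=
  if px.2 = 0 then px
  else (mexp px.1 px.2 t,
    (mnorm px.2 * Real.sinh (t * mnorm px.2)) • px.1 + Real.cosh (t * mnorm px.2) • px.2)

/-- Parallel transport from `p` to `q` along the geodesic. -/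
def ptransport (p q x : V) : V := x + (mink x q / (1 - mink p q)) • (p + q)

/-!
For a `0`-lipschitz field, `d' ≤ 0` reads `⟨x_p|q⟩ + ⟨x_q|p⟩ ≥ 0` for `x_p ∈ X(p)`,
`x_q ∈ X(q)`, and a Killing field satisfies this with equality. A point `m` between `p` and `q`
is a nonnegative combination `c₁ p + c₂ q`, so if `v ∧ p ∈ X(p)` and `v ∧ q ∈ X(q)` then every
`y ∈ X(s)` satisfies `⟨v ∧ s|m⟩ ≤ ⟨y|m⟩`. If `v ∧ m ∉ X(m)`, separate it from `X(m)` by a unit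
tangent vector `h`. Along the geodesic `r(t) = cosh t m + sinh t h` the inequality and tangency
force `⟨y|h⟩ ≤ ⟨v ∧ m|h⟩ cosh t` for `y ∈ X(r(t))`; a `0`-lipschitz field is locally bounded, so
these vectors accumulate, as `t → 0⁺`, at a vector of `X(m)` on the wrong side of the separation.
-/

open Filter Topology

lemma mink_comm (x y : V) : mink x y = mink y x := by
  unfold mink; ring

lemma mink_add_left (x y z : V) : mink (x + y) z = mink x z + mink y z := by
  simp only [mink, Pi.add_apply]; ring

lemma mink_add_right (x y z : V) : mink x (y + z) = mink x y + mink x z := by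
  simp only [mink, Pi.add_apply]; ring

lemma mink_sub_left (x y z : V) : mink (x - y) z = mink x z - mink y z := by
  simp only [mink, Pi.sub_apply]; ring

lemma mink_sub_right (x y z : V) : mink x (y - z) = mink x y - mink x z := by
  simp only [mink, Pi.sub_apply]; ring

lemma mink_smul_left (c : ℝ) (x y : V) : mink (c • x) y = c * mink x y := by
  simp only [mink, Pi.smul_apply, smul_eq_mul]; ring

lemma mink_smul_right (c : ℝ) (x y : V) : mink x (c • y) = c * mink x y := by
  simp only [mink, Pi.smul_apply, smul_eq_mul]; ring

lemma mink_neg_left (x y : V) : mink (-x) y = -mink x y := by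
  simp only [mink, Pi.neg_apply]; ring

lemma mink_neg_right (x y : V) : mink x (-y) = -mink x y := by
  simp only [mink, Pi.neg_apply]; ring

lemma mink_zero_right (x : V) : mink x 0 = 0 := by
  simp [mink]

@[fun_prop]
lemma Continuous.mink {α : Type*} [TopologicalSpace α] {f g : α → V} (hf : Continuous f)
    (hg : Continuous g) : Continuous fun a => mink (f a) (g a) := by
  unfold _root_.mink; fun_prop

lemma mink_mcross_self_right (v p : V) : mink (mcross v p) p = 0 := by
  simp [mink, mcross]; ring

lemma mink_mcross_self_left (a b : V) : mink (mcross a b) a = 0 := by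
  simp [mink, mcross]; ring

lemma mink_mcross_eq_neg (v p q : V) : mink (mcross v p) q = -mink (mcross v q) p := by
  simp [mink, mcross]; ring

lemma mink_mcross_mcross (a b : V) :
    mink (mcross a b) (mcross a b) = mink a b ^ 2 - mink a a * mink b b := by
  simp [mink, mcross]; ring

lemma mink_mcross_smul_sub (a b y : V) :
    mink (mcross a b) (mcross a b) • y - mink y (mcross a b) • mcross a b =
      -(mink b b * mink y a - mink a b * mink y b) • a
        - (mink a a * mink y b - mink a b * mink y a) • b := by
  funext i; fin_cases i <;> simp [mink, mcross] <;> ring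

lemma mink_self_pos_of_tangent {p x : V} (hp : p ∈ H2) (hx : mink x p = 0) (hx0 : x ≠ 0) :
    0 < mink x x := by
  obtain ⟨hp1, hp2⟩ := hp
  simp only [mink] at hp1 hx ⊢
  have hxp : (x 2 * p 2) ^ 2 = (x 0 * p 0 + x 1 * p 1) ^ 2 := by
    rw [show x 2 * p 2 = x 0 * p 0 + x 1 * p 1 by linarith]
  have hcs : (x 0 ^ 2 + x 1 ^ 2 - x 2 ^ 2) * p 2 ^ 2 - (x 0 ^ 2 + x 1 ^ 2)
      = (x 0 * p 1 - x 1 * p 0) ^ 2 := by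
    linear_combination (-(x 0 ^ 2 + x 1 ^ 2)) * hp1 - hxp
  by_contra hle
  have h0 : x 0 = 0 := by
    nlinarith [sq_nonneg (x 0), sq_nonneg (x 1), sq_nonneg (x 0 * p 1 - x 1 * p 0)]
  have h1 : x 1 = 0 := by
    nlinarith [sq_nonneg (x 0), sq_nonneg (x 1), sq_nonneg (x 0 * p 1 - x 1 * p 0)]
  have h2 : x 2 = 0 := by
    rw [h0, h1] at hx
    exact (mul_eq_zero.1 (by linarith : x 2 * p 2 = 0)).resolve_right hp2.ne'
  exact hx0 (funext fun i => by fin_cases i <;> assumption)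

lemma one_le_neg_mink {p q : V} (hp : p ∈ H2) (hq : q ∈ H2) : 1 ≤ -mink p q := by
  obtain ⟨hp1, hp2⟩ := hp
  obtain ⟨hq1, hq2⟩ := hq
  simp only [mink] at hp1 hq1 ⊢
  nlinarith [sq_nonneg (p 0 * q 2 - q 0 * p 2), sq_nonneg (p 1 * q 2 - q 1 * p 2),
    sq_nonneg (p 0 * q 1 - p 1 * q 0), mul_pos hp2 hq2, sq_nonneg (p 2 - q 2),
    sq_nonneg (p 0 - q 0), sq_nonneg (p 1 - q 1), sq_nonneg (p 2 + q 2)]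

lemma eq_of_neg_mink_eq_one {p q : V} (hp : p ∈ H2) (hq : q ∈ H2) (h : -mink p q = 1) :
    p = q := by
  have hpq : mink (p - q) p = 0 := by
    rw [mink_sub_left, hp.1, mink_comm]; linarith
  by_contra hne
  have hpos := mink_self_pos_of_tangent hp hpq (sub_ne_zero.2 hne)
  rw [mink_sub_left, mink_sub_right, mink_sub_right, hp.1, hq.1, mink_comm q p] at hpos
  linarith

lemma one_lt_neg_mink {p q : V} (hp : p ∈ H2) (hq : q ∈ H2) (hne : p ≠ q) :
    1 < -mink p q :=
  (one_le_neg_mink hp hq).lt_of_ne fun h => hne (eq_of_neg_mink_eq_one hp hq h.symm)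

lemma mem_H2_of_mink_neg {m p : V} (hm : m ∈ H2) (hp : mink p p = -1) (hpm : mink p m < 0) :
    p ∈ H2 := by
  refine ⟨hp, lt_of_not_ge fun hp2 => ?_⟩
  have hp2' : p 2 ≠ 0 := by
    rintro h0
    simp only [mink, h0] at hp
    nlinarith [sq_nonneg (p 0), sq_nonneg (p 1)]
  have hneg : -p ∈ H2 := by
    refine ⟨by rw [mink_neg_left, mink_neg_right, hp]; ring, ?_⟩
    simpa using lt_of_le_of_ne hp2 hp2'
  have := one_le_neg_mink hneg hm
  rw [mink_neg_left] at this
  linarith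

lemma smul_add_smul_mem_H2 {m u : V} (hm : m ∈ H2) (hum : mink u m = 0) (huu : mink u u = 1)
    {a b : ℝ} (hab : a ^ 2 - b ^ 2 = 1) (ha : 0 < a) : a • m + b • u ∈ H2 := by
  have hmu : mink m u = 0 := by rw [mink_comm, hum]
  apply mem_H2_of_mink_neg hm
  · simp only [mink_add_left, mink_add_right, mink_smul_left, mink_smul_right, hm.1, huu, hum,
      hmu]
    linear_combination -hab
  · simp only [mink_add_left, mink_smul_left, hm.1, hum]
    linarith

lemma exists_pos_mink_smul_self_eq_one {x : V} (hx : 0 < mink x x) :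
    ∃ c : ℝ, 0 < c ∧ mink (c • x) (c • x) = 1 := by
  refine ⟨(√(mink x x))⁻¹, by positivity, ?_⟩
  rw [mink_smul_left, mink_smul_right, ← mul_assoc, ← mul_inv, Real.mul_self_sqrt hx.le,
    inv_mul_cancel₀ hx.ne']

lemma exists_unit_tangent {m : V} (hm : m ∈ H2) : ∃ e, mink e m = 0 ∧ mink e e = 1 := by
  set x : V := ![m 2, 0, m 0]
  have hxm : mink x m = 0 := by simp [x, mink]; ring
  have hxx : 0 < mink x x := by
    have := hm.1
    simp only [mink] at this
    simp [x, mink]; nlinarith [sq_nonneg (m 1)]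
  obtain ⟨c, -, hc⟩ := exists_pos_mink_smul_self_eq_one hxx
  exact ⟨c • x, by rw [mink_smul_left, hxm, mul_zero], hc⟩

lemma eq_frame_expansion {m e : V} (hm : mink m m = -1) (hem : mink e m = 0)
    (hee : mink e e = 1) (y : V) :
    y = (-mink y m) • m + mink y e • e + mink y (mcross m e) • mcross m e := by
  have h := mink_mcross_smul_sub m e y
  rw [mink_mcross_mcross, hm, hee, mink_comm m e, hem] at h
  linear_combination (norm := module) h

lemma hdist_eq_arcosh (p q : V) : hdist p q = Real.arcosh (-mink p q) := rfl

lemma mexp_zero (p x : V) : mexp p x 0 = p := by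
  unfold mexp; split_ifs <;> simp

lemma hasDerivAt_mexp {p x : V} (hp : p ∈ H2) (hx : mink x p = 0) :
    HasDerivAt (mexp p x) x 0 := by
  rcases eq_or_ne x 0 with rfl | hx0
  · have hconst : mexp p 0 = fun _ => p := funext fun _ => if_pos rfl
    simpa [hconst] using hasDerivAt_const (0 : ℝ) p
  · have ha : 0 < mnorm x := Real.sqrt_pos.2 (mink_self_pos_of_tangent hp hx hx0)
    have hc : HasDerivAt (fun t => Real.cosh (t * mnorm x)) 0 0 := by
      simpa using ((hasDerivAt_id (0 : ℝ)).mul_const (mnorm x)).cosh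
    have hs : HasDerivAt (fun t => Real.sinh (t * mnorm x) / mnorm x) 1 0 := by
      simpa [ha.ne'] using (((hasDerivAt_id (0 : ℝ)).mul_const (mnorm x)).sinh).div_const
        (mnorm x)
    have hform : mexp p x = fun t => Real.cosh (t * mnorm x) • p
        + (Real.sinh (t * mnorm x) / mnorm x) • x := funext fun _ => if_neg hx0
    have h := (hc.smul_const p).add (hs.smul_const x)
    rw [zero_smul, zero_add, one_smul] at h
    rw [hform]
    exact h

lemma hasDerivAt_mink_mexp {p xp q xq : V} (hp : p ∈ H2) (hq : q ∈ H2)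
    (hxp : mink xp p = 0) (hxq : mink xq q = 0) :
    HasDerivAt (fun t => mink (mexp p xp t) (mexp q xq t)) (mink xp q + mink xq p) 0 := by
  have hP := hasDerivAt_pi.1 (hasDerivAt_mexp hp hxp)
  have hQ := hasDerivAt_pi.1 (hasDerivAt_mexp hq hxq)
  have h := (((hP 0).mul (hQ 0)).add ((hP 1).mul (hQ 1))).sub ((hP 2).mul (hQ 2))
  refine h.congr_deriv ?_
  simp only [mink, mexp_zero]; ring

lemma hasDerivAt_hdist_mexp {p xp q xq : V} (hp : p ∈ H2) (hq : q ∈ H2) (hpq : p ≠ q)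
    (hxp : mink xp p = 0) (hxq : mink xq q = 0) :
    HasDerivAt (fun t => hdist (mexp p xp t) (mexp q xq t))
      (-(mink xp q + mink xq p) / Real.sinh (hdist p q)) 0 := by
  have hC := one_lt_neg_mink hp hq hpq
  have harcosh := Real.hasDerivAt_arcosh (x := -mink (mexp p xp 0) (mexp q xq 0))
    (by simpa only [mexp_zero, Set.mem_Ioi] using hC)
  have h := harcosh.comp 0 (hasDerivAt_mink_mexp hp hq hxp hxq).neg
  rw [hdist_eq_arcosh, Real.sinh_arcosh hC.le]
  simp only [mexp_zero] at h
  exact h.congr_deriv (by rw [neg_sq, div_eq_inv_mul])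

lemma mink_add_mink_nonneg_of_lipschitzField_zero {X : Set (V × V)} (hX : IsConvexField X)
    (hlip : LipschitzField 0 X) {p xp q xq : V} (hp : (p, xp) ∈ X) (hq : (q, xq) ∈ X) :
    0 ≤ mink xp q + mink xq p := by
  obtain ⟨hpH, hxp⟩ := hX.2.1 _ hp
  obtain ⟨hqH, hxq⟩ := hX.2.1 _ hq
  rcases eq_or_ne p q with rfl | hpq
  · simp [hxp, hxq]
  have hsinh : 0 < Real.sinh (hdist p q) :=
    Real.sinh_pos_iff.2 (Real.arcosh_pos (one_lt_neg_mink hpH hqH hpq))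
  have hd := hlip p xp q xq hp hq hpq
  rw [dprime, (hasDerivAt_hdist_mexp hpH hqH hpq hxp hxq).deriv, zero_mul,
    div_le_iff₀ hsinh, zero_mul] at hd
  linarith

lemma neg_mink_eq_of_hdist_add {p q m : V} (hp : p ∈ H2) (hq : q ∈ H2) (hm : m ∈ H2)
    (h : hdist p m + hdist m q = hdist p q) :
    -mink p q = -mink p m * -mink m q
      + √((-mink p m) ^ 2 - 1) * √((-mink m q) ^ 2 - 1) := by
  have hcosh := congrArg Real.cosh h
  simp only [hdist_eq_arcosh, Real.cosh_add] at hcosh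
  rwa [Real.cosh_arcosh (one_le_neg_mink hp hm), Real.cosh_arcosh (one_le_neg_mink hm hq),
    Real.sinh_arcosh (one_le_neg_mink hp hm), Real.sinh_arcosh (one_le_neg_mink hm hq),
    Real.cosh_arcosh (one_le_neg_mink hp hq), eq_comm] at hcosh

lemma exists_nonneg_smul_add_smul_of_hdist_add {p q m : V} (hp : p ∈ H2) (hq : q ∈ H2)
    (hm : m ∈ H2) (h : hdist p m + hdist m q = hdist p q) :
    ∃ c₁ c₂ : ℝ, 0 ≤ c₁ ∧ 0 ≤ c₂ ∧ m = c₁ • p + c₂ • q := by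
  rcases eq_or_ne m p with rfl | hmp
  · exact ⟨1, 0, zero_le_one, le_rfl, by simp⟩
  have hC := neg_mink_eq_of_hdist_add hp hq hm h
  set A := -mink p m
  set B := -mink m q
  have hA : 1 < A := one_lt_neg_mink hp hm (Ne.symm hmp)
  have hB : 1 ≤ B := one_le_neg_mink hm hq
  set sA := √(A ^ 2 - 1)
  set sB := √(B ^ 2 - 1)
  have hsA : 0 < sA := Real.sqrt_pos.2 (by nlinarith)
  have hsA2 : sA ^ 2 = A ^ 2 - 1 := Real.sq_sqrt (by nlinarith)
  have hsB2 : sB ^ 2 = B ^ 2 - 1 := Real.sq_sqrt (by nlinarith)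
  -- `D = sinh d(p, q)`: the weights are `sinh d(m, q) / sinh d(p, q)` and
  -- `sinh d(p, m) / sinh d(p, q)`.
  set D := sA * B + A * sB
  have hD : 0 < D := by positivity
  refine ⟨sB / D, sA / D, by positivity, by positivity, ?_⟩
  set z := m - (sB / D) • p - (sA / D) • q
  have hz : ∀ y, mink z y = mink m y - sB / D * mink p y - sA / D * mink q y := fun y => by
    simp only [z, mink_sub_left, mink_smul_left]
  have hzp : mink z p = 0 := by
    rw [hz, hp.1, mink_comm m p, mink_comm q p]
    field_simp
    linear_combination sB * hsA2 + sA * hC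
  have hzq : mink z q = 0 := by
    rw [hz, hq.1]
    field_simp
    linear_combination sA * hsB2 + sB * hC
  have hzm : mink z m = 0 := by
    rw [hz, hm.1, mink_comm q m]
    field_simp
    ring
  have hzz : mink z z = 0 := by
    simp only [z, mink_sub_right, mink_smul_right, hzm, hzp, hzq]; ring
  have hz0 : z = 0 := by
    by_contra h0
    exact (mink_self_pos_of_tangent hp hzp h0).ne' hzz
  linear_combination (norm := module) hz0

lemma mink_mcross_le_of_mem {X : Set (V × V)} (hX : IsConvexField X) (hlip : LipschitzField 0 X)
    {v p s y : V} (hp : (p, mcross v p) ∈ X) (hs : (s, y) ∈ X) :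
    mink (mcross v s) p ≤ mink y p := by
  have h := mink_add_mink_nonneg_of_lipschitzField_zero hX hlip hp hs
  rw [mink_mcross_eq_neg v p s] at h
  linarith

lemma exists_eventually_neg_le_mink {X : Set (V × V)} (hX : IsConvexField X)
    (hdef : DefinedOver X H2) (hlip : LipschitzField 0 X) {s₀ : V} (hs₀ : s₀ ∈ H2) (m : V) :
    ∃ C, ∀ᶠ s in 𝓝 m, ∀ y ∈ fiberAt X s, -C ≤ mink y s₀ := by
  obtain ⟨x₀, hx₀⟩ := hdef s₀ hs₀
  refine ⟨mink x₀ m + 1, ?_⟩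
  have hnear : ∀ᶠ s in 𝓝 m, mink x₀ s < mink x₀ m + 1 :=
    (Continuous.tendsto (by fun_prop) m).eventually (gt_mem_nhds (lt_add_one _))
  filter_upwards [hnear] with s hs y hy
  linarith [mink_add_mink_nonneg_of_lipschitzField_zero hX hlip hx₀ hy]

lemma norm_le_of_frame_bounds {m e y s : V} {C : ℝ} (hm : mink m m = -1) (hem : mink e m = 0)
    (hee : mink e e = 1) (hys : mink y s = 0) (hse : |mink s e| < -mink s m / 4)
    (hsn : |mink s (mcross m e)| < -mink s m / 4)
    (h₁ : -C ≤ 5 / 3 * mink y m + 4 / 3 * mink y e)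
    (h₂ : -C ≤ 5 / 3 * mink y m + 4 / 3 * mink y (-e))
    (h₃ : -C ≤ 5 / 3 * mink y m + 4 / 3 * mink y (mcross m e))
    (h₄ : -C ≤ 5 / 3 * mink y m + 4 / 3 * mink y (-mcross m e)) :
    ‖y‖ ≤ 2 * C * (‖m‖ + ‖e‖ + ‖mcross m e‖) := by
  rw [mink_neg_right] at h₂ h₄
  have hexp := eq_frame_expansion hm hem hee y
  set n := mcross m e
  set A := mink y m
  set B := mink y e
  set G := mink y n
  have htan : A * mink s m = B * mink s e + G * mink s n := by
    have h := congrArg (mink · s) hexp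
    simp only [mink_add_left, mink_smul_left] at h
    rw [mink_comm m s, mink_comm e s, mink_comm n s] at h
    linear_combination h - hys
  have hρ : 0 < -mink s m := by linarith [abs_nonneg (mink s e)]
  have hA : |A| ≤ (|B| + |G|) / 4 := by
    refine le_of_mul_le_mul_right ?_ hρ
    calc |A| * -mink s m = |B * mink s e + G * mink s n| := by
          rw [← htan, abs_mul, abs_of_neg (neg_pos.1 hρ)]
      _ ≤ |B| * |mink s e| + |G| * |mink s n| := by
        rw [← abs_mul, ← abs_mul]; exact abs_add_le _ _
      _ ≤ |B| * (-mink s m / 4) + |G| * (-mink s m / 4) := by gcongr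
      _ = (|B| + |G|) / 4 * -mink s m := by ring
  have hB : |B| ≤ (3 * C + 5 * |A|) / 4 :=
    abs_le.2 ⟨by linarith [le_abs_self A], by linarith [le_abs_self A]⟩
  have hG : |G| ≤ (3 * C + 5 * |A|) / 4 :=
    abs_le.2 ⟨by linarith [le_abs_self A], by linarith [le_abs_self A]⟩
  calc ‖y‖ = ‖(-A) • m + B • e + G • n‖ := congrArg norm hexp
    _ ≤ ‖(-A) • m‖ + ‖B • e‖ + ‖G • n‖ := norm_add₃_le
    _ = |A| * ‖m‖ + |B| * ‖e‖ + |G| * ‖n‖ := by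
      simp only [norm_smul, Real.norm_eq_abs, abs_neg]
    _ ≤ 2 * C * ‖m‖ + 2 * C * ‖e‖ + 2 * C * ‖n‖ := by
      gcongr <;> linarith [abs_nonneg A, abs_nonneg B, abs_nonneg G]
    _ = 2 * C * (‖m‖ + ‖e‖ + ‖n‖) := by ring

lemma exists_eventually_neg_le_mink_of_unit_tangent {X : Set (V × V)} (hX : IsConvexField X)
    (hdef : DefinedOver X H2) (hlip : LipschitzField 0 X) {m u : V} (hm : m ∈ H2)
    (hum : mink u m = 0) (huu : mink u u = 1) :
    ∃ C, ∀ᶠ s in 𝓝 m, ∀ y ∈ fiberAt X s, -C ≤ 5 / 3 * mink y m + 4 / 3 * mink y u := by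
  obtain ⟨C, hC⟩ := exists_eventually_neg_le_mink hX hdef hlip
    (smul_add_smul_mem_H2 hm hum huu (a := 5 / 3) (b := 4 / 3) (by norm_num) (by norm_num)) m
  exact ⟨C, hC.mono fun s hs y hy => by
    simpa only [mink_add_right, mink_smul_right] using hs y hy⟩

-- Vectors of `X` at the four points `(5/3) m ± (4/3) e`, `(5/3) m ± (4/3) (m ∧ e)` bound every
-- fiber near `m` from one side in four directions; tangency to `ℍ²` closes the box.
lemma exists_eventually_norm_le_of_lipschitzField_zero {X : Set (V × V)} (hX : IsConvexField X)
    (hdef : DefinedOver X H2) (hlip : LipschitzField 0 X) {m : V} (hm : m ∈ H2) :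
    ∃ R, ∀ᶠ s in 𝓝 m, ∀ y ∈ fiberAt X s, ‖y‖ ≤ R := by
  obtain ⟨e, hem, hee⟩ := exists_unit_tangent hm
  set n := mcross m e
  have hnm : mink n m = 0 := mink_mcross_self_left m e
  have hnn : mink n n = 1 := by
    rw [mink_mcross_mcross, hm.1, hee, mink_comm m e, hem]; ring
  have href := fun u (hum : mink u m = 0) (huu : mink u u = 1) =>
    exists_eventually_neg_le_mink_of_unit_tangent hX hdef hlip hm hum huu
  obtain ⟨C₁, h₁⟩ := href e hem hee
  obtain ⟨C₂, h₂⟩ := href (-e) (by rw [mink_neg_left, hem, neg_zero])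
    (by rw [mink_neg_left, mink_neg_right, neg_neg, hee])
  obtain ⟨C₃, h₃⟩ := href n hnm hnn
  obtain ⟨C₄, h₄⟩ := href (-n) (by rw [mink_neg_left, hnm, neg_zero])
    (by rw [mink_neg_left, mink_neg_right, neg_neg, hnn])
  have hcoord : ∀ u, mink u m = 0 → ∀ᶠ s in 𝓝 m, |mink s u| < -mink s m / 4 := fun u hum =>
    (Continuous.tendsto (by fun_prop) m).eventually_lt (Continuous.tendsto (by fun_prop) m)
      (by rw [mink_comm, hum, hm.1]; norm_num)
  refine ⟨2 * (|C₁| + |C₂| + |C₃| + |C₄|) * (‖m‖ + ‖e‖ + ‖n‖), ?_⟩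
  filter_upwards [h₁, h₂, h₃, h₄, hcoord e hem, hcoord n hnm] with s h₁ h₂ h₃ h₄ hse hsn y hy
  refine norm_le_of_frame_bounds hm.1 hem hee (hX.2.1 (s, y) hy).2 hse hsn ?_ ?_ ?_ ?_ <;>
    linarith [h₁ y hy, h₂ y hy, h₃ y hy, h₄ y hy, le_abs_self C₁, le_abs_self C₂,
      le_abs_self C₃, le_abs_self C₄, abs_nonneg C₁, abs_nonneg C₂, abs_nonneg C₃, abs_nonneg C₄]

lemma exists_forall_eq_mink (f : V →L[ℝ] ℝ) : ∃ w, ∀ y, f y = mink y w := by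
  set b : Fin 3 → V := fun i j => if i = j then 1 else 0
  refine ⟨![f (b 0), f (b 1), -f (b 2)], fun y => ?_⟩
  rw [← f.coe_coe, LinearMap.pi_apply_eq_sum_univ, Fin.sum_univ_three]
  simp [mink, b]

lemma exists_unit_tangent_separating {m z : V} {T : Set V} (hm : m ∈ H2) (hT : Convex ℝ T)
    (hTc : IsClosed T) (hTne : T.Nonempty) (hTm : ∀ x ∈ T, mink x m = 0) (hzm : mink z m = 0)
    (hz : z ∉ T) : ∃ h, mink h m = 0 ∧ mink h h = 1 ∧ ∀ x ∈ T, mink z h < mink x h := by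
  obtain ⟨f, u, hfz, hfT⟩ := geometric_hahn_banach_point_closed hT hTc hz
  obtain ⟨w, hw⟩ := exists_forall_eq_mink f
  -- the projection of `w` to the tangent plane at `m` represents `f` on that plane
  set h₀ := w + mink w m • m
  have hh₀m : mink h₀ m = 0 := by
    simp only [h₀, mink_add_left, mink_smul_left, hm.1]; ring
  have hh₀ : ∀ y, mink y m = 0 → mink y h₀ = f y := fun y hy => by
    simp only [h₀, mink_add_right, mink_smul_right, hy, hw]; ring
  have hlt : ∀ x ∈ T, mink z h₀ < mink x h₀ := fun x hx => by
    rw [hh₀ z hzm, hh₀ x (hTm x hx)]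
    exact hfz.trans (hfT x hx)
  obtain ⟨x₀, hx₀⟩ := hTne
  have hne : h₀ ≠ 0 := by
    rintro h0
    simpa [h0, mink_zero_right] using hlt x₀ hx₀
  obtain ⟨c, hc, hcc⟩ := exists_pos_mink_smul_self_eq_one (mink_self_pos_of_tangent hm hh₀m hne)
  refine ⟨c • h₀, by rw [mink_smul_left, hh₀m, mul_zero], hcc, fun x hx => ?_⟩
  rw [mink_smul_right, mink_smul_right]
  exact mul_lt_mul_of_pos_left (hlt x hx) hc

lemma exists_mem_of_mem_closure_image_fst {α β : Type*} [TopologicalSpace α]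
    [FrechetUrysohnSpace α] [NormedAddCommGroup β] [ProperSpace β] {C : Set (α × β)}
    (hC : IsClosed C) {a : α} {R : ℝ} (hR : ∀ᶠ x in 𝓝 a, ∀ y, (x, y) ∈ C → ‖y‖ ≤ R)
    (ha : a ∈ closure (Prod.fst '' C)) : ∃ y, (a, y) ∈ C := by
  obtain ⟨s, hsC, hs⟩ := mem_closure_iff_seq_limit.1 ha
  choose z hzC hz using hsC
  have hbdd : ∀ᶠ n in atTop, (z n).2 ∈ Metric.closedBall (0 : β) R :=
    (hs.eventually hR).mono fun n hn => mem_closedBall_zero_iff.2 (hn _ (hz n ▸ hzC n))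
  obtain ⟨b, -, φ, hφ, hb⟩ := (isCompact_closedBall (0 : β) R).tendsto_subseq' hbdd.frequently
  have hfst : Tendsto (fun n => (z (φ n)).1) atTop (𝓝 a) := by
    simpa only [hz, Function.comp_def] using hs.comp hφ.tendsto_atTop
  exact ⟨b, hC.mem_of_tendsto (hfst.prodMk_nhds hb) (Eventually.of_forall fun n => hzC (φ n))⟩

lemma mink_le_mink_mcross_mul_cosh {v m h y : V} {t : ℝ} (ht : 0 < t)
    (hy : mink y (Real.cosh t • m + Real.sinh t • h) = 0)
    (hle : mink (mcross v (Real.cosh t • m + Real.sinh t • h)) m ≤ mink y m) :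
    mink y h ≤ mink (mcross v m) h * Real.cosh t := by
  rw [mink_mcross_eq_neg] at hle
  simp only [mink_add_right, mink_smul_right, mink_mcross_self_right] at hy hle
  nlinarith [Real.cosh_pos t, Real.sinh_pos_iff.2 ht]

lemma mcross_mem_of_forall_mink_mcross_le {X : Set (V × V)} (hX : IsConvexField X)
    (hdef : DefinedOver X H2) (hlip : LipschitzField 0 X) {v m : V} (hm : m ∈ H2)
    (hle : ∀ s y, (s, y) ∈ X → mink (mcross v s) m ≤ mink y m) : (m, mcross v m) ∈ X := by
  by_contra hnot
  obtain ⟨h, hhm, hhh, hsep⟩ := exists_unit_tangent_separating hm (hX.2.2 m)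
    (hX.1.preimage (Continuous.prodMk_right m)) (hdef m hm) (fun x hx => (hX.2.1 (m, x) hx).2)
    (mink_mcross_self_right v m) hnot
  set K := mink (mcross v m) h
  set C := {sy ∈ X | mink sy.2 h ≤ -(K * mink sy.1 m)}
  have hCc : IsClosed C := hX.1.inter <| isClosed_le (f := fun sy : V × V => mink sy.2 h)
    (g := fun sy => -(K * mink sy.1 m)) (by fun_prop) (by fun_prop)
  set r : ℝ → V := fun t => Real.cosh t • m + Real.sinh t • h
  have hrC : ∀ t ∈ Set.Ioi (0 : ℝ), r t ∈ Prod.fst '' C := by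
    intro t ht
    obtain ⟨y, hy⟩ := hdef (r t)
      (smul_add_smul_mem_H2 hm hhm hhh (Real.cosh_sq_sub_sinh_sq t) (Real.cosh_pos t))
    refine ⟨(r t, y), ⟨hy, ?_⟩, rfl⟩
    have hrm : mink (r t) m = -Real.cosh t := by
      simp only [r, mink_add_left, mink_smul_left, hm.1, hhm]; ring
    rw [hrm, mul_neg, neg_neg]
    exact mink_le_mink_mcross_mul_cosh ht (hX.2.1 _ hy).2 (hle _ _ hy)
  have hmC : m ∈ closure (Prod.fst '' C) := by
    have hr : Tendsto r (𝓝[>] 0) (𝓝 m) := by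
      simpa [r] using ((by fun_prop : Continuous r).tendsto 0).mono_left nhdsWithin_le_nhds
    exact mem_closure_of_tendsto hr (eventually_nhdsWithin_of_forall hrC)
  obtain ⟨R, hR⟩ := exists_eventually_norm_le_of_lipschitzField_zero hX hdef hlip hm
  obtain ⟨y, hyX, hyh⟩ :=
    exists_mem_of_mem_closure_image_fst hCc (hR.mono fun s hs y hy => hs y hy.1) hmC
  rw [hm.1] at hyh
  linarith [hsep y hyX]

/-- Proposition 3.6: for a `0`-lipschitz convex field `X` defined over all
of `ℍ²` and a Killing field `v`, the set where the Killing field belongs to `X` is convex. -/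
theorem statement10 (X : Set (V × V)) (hX : IsConvexField X) (hdef : DefinedOver X H2)
    (hlip : LipschitzField 0 X) (v : V) :
    HConvex {p | p ∈ H2 ∧ (p, mcross v p) ∈ X} := by
  rintro p ⟨hp, hpX⟩ q ⟨hq, hqX⟩ m hm hpmq
  obtain ⟨c₁, c₂, hc₁, hc₂, hmpq⟩ := exists_nonneg_smul_add_smul_of_hdist_add hp hq hm hpmq
  refine ⟨hm, mcross_mem_of_forall_mink_mcross_le hX hdef hlip hm fun s y hsy => ?_⟩
  have hP := mul_le_mul_of_nonneg_left (mink_mcross_le_of_mem hX hlip hpX hsy) hc₁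
  have hQ := mul_le_mul_of_nonneg_left (mink_mcross_le_of_mem hX hlip hqX hsy) hc₂
  simp only [hmpq, mink_add_right, mink_smul_right]
  linarith
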